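/- In an N-bidder second-price auction, consider the information structure that, for each realized value profile v, reveals to one bidder i* attaining max(v) the signal s_{i*} = v_{i*} and gives all other bidders the signal 0, and consider the strategy profile of bidding one's signal. Then this is a Bayes Nash equilibrium; under it the item is always allocated to a maximal-value bidder (welfare equals E[max_i v_i]), revenue is 0, and aggregate bidder surplus equals E[max_i v_i]. -/

import Mathlib

open scoped Classical BigOperators

/-- Highest coordinate. -/
noncomputable def maxVal {N : ℕ} (β : Fin N → ℝ) : ℝ := sSup (Set.range β)

/-- Second-highest coordinate. -/
noncomputable def secmax {N : ℕ} (β : Fin N → ℝ) : ℝ :=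
  sInf {x | ∃ i : Fin N, x = sSup {y | ∃ j : Fin N, j ≠ i ∧ y = β j}}

/-- Uniform tie-breaking winning share. -/
noncomputable def winShare {N : ℕ} (β : Fin N → ℝ) (i : Fin N) : ℝ :=
  if β i = maxVal β then
    1 / ((Finset.univ.filter fun j => β j = maxVal β).card : ℝ)
  else 0

/-- Probability of the state `(v, k)` where `k` is the uniformly tie-broken maximizer. -/
noncomputable def wMax {N : ℕ} (lam : (Fin N → ℝ) → ℝ) (v : Fin N → ℝ) (k : Fin N) : ℝ :=
  lam v * (if v k = maxVal v then
    1 / ((Finset.univ.filter fun i => v i = maxVal v).card : ℝ) else 0)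

/-- The signal of bidder `i` in state `(v, k)`: the winner `k` learns her value, all
other bidders receive the null signal `0`. -/
noncomputable def sigMax {N : ℕ} (v : Fin N → ℝ) (k i : Fin N) : ℝ :=
  if i = k then v k else 0

section helpers
variable {N : ℕ}

lemma maxVal_eq (β : Fin N → ℝ) (m : Fin N) (h : ∀ j, β j ≤ β m) : maxVal β = β m :=
  IsGreatest.csSup_eq ⟨⟨m, rfl⟩, by rintro x ⟨j, rfl⟩; exact h j⟩

lemma le_maxVal (β : Fin N → ℝ) (j : Fin N) : β j ≤ maxVal β :=
  le_csSup (Set.finite_range β).bddAbove ⟨j, rfl⟩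

lemma fin_exists_ne (hN : 2 ≤ N) (i : Fin N) : ∃ m : Fin N, m ≠ i := by
  have : 1 < Fintype.card (Fin N) := by rw [Fintype.card_fin]; omega
  exact Fintype.exists_ne_of_one_lt_card this i

lemma topOther_bdd (β : Fin N → ℝ) (i : Fin N) :
    BddAbove {y | ∃ j : Fin N, j ≠ i ∧ y = β j} := by
  have h : {y | ∃ j : Fin N, j ≠ i ∧ y = β j} = β '' {j | j ≠ i} := by
    ext y
    constructor
    · rintro ⟨j, hj, rfl⟩; exact ⟨j, hj, rfl⟩
    · rintro ⟨j, hj, rfl⟩; exact ⟨j, hj, rfl⟩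
  rw [h]
  exact ((Set.toFinite _).image β).bddAbove

lemma topOther_eq (β : Fin N → ℝ) (i m : Fin N) (hm : m ≠ i)
    (h : ∀ j, j ≠ i → β j ≤ β m) :
    sSup {y | ∃ j : Fin N, j ≠ i ∧ y = β j} = β m :=
  IsGreatest.csSup_eq ⟨⟨m, hm, rfl⟩, by rintro x ⟨j, hj, rfl⟩; exact h j hj⟩

lemma secmax_eq (β : Fin N → ℝ) (c : ℝ)
    (h1 : ∃ i : Fin N, sSup {y | ∃ j : Fin N, j ≠ i ∧ y = β j} = c)
    (h2 : ∀ i : Fin N, c ≤ sSup {y | ∃ j : Fin N, j ≠ i ∧ y = β j}) :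
    secmax β = c := by
  apply IsLeast.csInf_eq
  constructor
  · obtain ⟨i, hi⟩ := h1
    exact ⟨i, hi.symm⟩
  · rintro x ⟨i, rfl⟩
    exact h2 i

lemma maxVal_peak (β : Fin N → ℝ) (k : Fin N) (a : ℝ) (ha : 0 ≤ a)
    (hβ : ∀ j, β j = if j = k then a else 0) : maxVal β = a := by
  have h := maxVal_eq β k (fun j => by
    rw [hβ j, hβ k, if_pos rfl]
    split <;> simp [ha])
  rw [h, hβ k, if_pos rfl]

lemma secmax_peak (hN : 2 ≤ N) (β : Fin N → ℝ) (k : Fin N) (a : ℝ) (ha : 0 ≤ a)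
    (hβ : ∀ j, β j = if j = k then a else 0) : secmax β = 0 := by
  apply secmax_eq β 0
  · obtain ⟨m, hm⟩ := fin_exists_ne hN k
    refine ⟨k, ?_⟩
    rw [topOther_eq β k m hm (fun j hj => by rw [hβ j, if_neg hj, hβ m, if_neg hm]),
      hβ m, if_neg hm]
  · intro m
    obtain ⟨n, hn⟩ := fin_exists_ne hN m
    have h0 : (0:ℝ) ≤ β n := by rw [hβ n]; split <;> simp [ha]
    exact h0.trans (le_csSup (topOther_bdd β m) ⟨n, hn, rfl⟩)

lemma secmax_twopeak (hN : 2 ≤ N) (β : Fin N → ℝ) (i k : Fin N) (hik : i ≠ k)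
    (a b : ℝ) (ha : 0 ≤ a) (hab : a ≤ b)
    (hβ : ∀ j, β j = if j = i then b else if j = k then a else 0) :
    secmax β = a := by
  have hβk : β k = a := by rw [hβ k, if_neg (Ne.symm hik), if_pos rfl]
  have hβi : β i = b := by rw [hβ i, if_pos rfl]
  apply secmax_eq β a
  · refine ⟨i, ?_⟩
    rw [topOther_eq β i k (Ne.symm hik) (fun j hj => by
      rw [hβ j, if_neg hj, hβk]
      split <;> simp [ha]), hβk]
  · intro m
    by_cases hmk : k = m
    · subst hmk
      calc a ≤ b := hab
        _ = β i := hβi.symm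
        _ ≤ _ := le_csSup (topOther_bdd β k) ⟨i, hik, rfl⟩
    · calc a = β k := hβk.symm
        _ ≤ _ := le_csSup (topOther_bdd β m) ⟨k, hmk, rfl⟩

lemma winShare_nonneg (β : Fin N → ℝ) (i : Fin N) : 0 ≤ winShare β i := by
  unfold winShare
  split
  · positivity
  · exact le_refl 0

lemma winShare_le_one (β : Fin N → ℝ) (i : Fin N) : winShare β i ≤ 1 := by
  unfold winShare
  split
  · rename_i h
    have hmem : i ∈ Finset.univ.filter (fun j => β j = maxVal β) :=
      Finset.mem_filter.2 ⟨Finset.mem_univ i, h⟩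
    have hc : (1:ℝ) ≤ ((Finset.univ.filter fun j => β j = maxVal β).card : ℝ) := by
      exact_mod_cast Finset.card_pos.2 ⟨i, hmem⟩
    rw [div_le_one (by linarith)]
    exact hc
  · norm_num

lemma winShare_eq_zero (β : Fin N → ℝ) (i : Fin N) (h : β i ≠ maxVal β) :
    winShare β i = 0 := by
  unfold winShare
  rw [if_neg h]

lemma winShare_peak (β : Fin N → ℝ) (k : Fin N) (a : ℝ) (ha : 0 < a)
    (hβ : ∀ j, β j = if j = k then a else 0) (i : Fin N) :
    winShare β i = if i = k then 1 else 0 := by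
  have hmax : maxVal β = a := maxVal_peak β k a ha.le hβ
  have hfil : Finset.univ.filter (fun j => β j = maxVal β) = {k} := by
    ext j
    simp only [Finset.mem_filter, Finset.mem_univ, true_and, Finset.mem_singleton, hmax, hβ j]
    constructor
    · intro h
      by_contra hj
      rw [if_neg hj] at h
      exact ha.ne h
    · intro h
      rw [if_pos h]
  unfold winShare
  rw [hfil]
  by_cases hik : i = k
  · rw [if_pos hik, if_pos (by rw [hβ i, if_pos hik, hmax])]
    simp
  · rw [if_neg hik, if_neg (by rw [hβ i, if_neg hik, hmax]; exact fun h => ha.ne h)]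


end helpers

section main
variable {N : ℕ}

lemma sigMax_peak (v : Fin N → ℝ) (k : Fin N) :
    ∀ j, (fun j => sigMax v k j) j = if j = k then v k else 0 := fun _ => rfl

lemma wMax_sum (hN : 2 ≤ N) (lam : (Fin N → ℝ) → ℝ) (v : Fin N → ℝ) :
    ∑ k : Fin N, wMax lam v k = lam v := by
  have : Nonempty (Fin N) := ⟨⟨0, by omega⟩⟩
  obtain ⟨m, hm⟩ := Finite.exists_max v
  have hmm : v m = maxVal v := (maxVal_eq v m hm).symm
  have hmem : m ∈ Finset.univ.filter (fun i => v i = maxVal v) :=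
    Finset.mem_filter.2 ⟨Finset.mem_univ m, hmm⟩
  have hc : ((Finset.univ.filter fun i => v i = maxVal v).card : ℝ) ≠ 0 := by
    exact_mod_cast (Finset.card_pos.2 ⟨m, hmem⟩).ne'
  unfold wMax
  rw [← Finset.mul_sum, ← Finset.sum_filter, Finset.sum_const, nsmul_eq_mul,
    mul_one_div_cancel hc, mul_one]

lemma welfare_eq (hN : 2 ≤ N) (v : Fin N → ℝ) (hv : ∀ j, 0 ≤ v j) (k : Fin N)
    (hk : v k = maxVal v) :
    ∑ i, winShare (fun j => sigMax v k j) i * v i = maxVal v := by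
  rcases eq_or_lt_of_le (hv k) with h0 | hpos
  · have hall : ∀ j, v j = 0 := fun j =>
      le_antisymm (by
        calc v j ≤ maxVal v := le_maxVal v j
          _ = v k := hk.symm
          _ = 0 := h0.symm) (hv j)
    rw [← hk, ← h0]
    exact Finset.sum_eq_zero fun i _ => by rw [hall i, mul_zero]
  · have hws := winShare_peak (fun j => sigMax v k j) k (v k) hpos (sigMax_peak v k)
    rw [← hk]
    rw [Finset.sum_eq_single k]
    · rw [hws k, if_pos rfl, one_mul]
    · intro i _ hik
      rw [hws i, if_neg hik, zero_mul]
    · intro h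
      exact absurd (Finset.mem_univ k) h

lemma wMax_nonneg (lam : (Fin N → ℝ) → ℝ) (v : Fin N → ℝ) (hl : 0 ≤ lam v) (k : Fin N) :
    0 ≤ wMax lam v k := by
  unfold wMax
  apply mul_nonneg hl
  split
  · positivity
  · exact le_refl 0

end main

/-- Maximal bidder surplus: revealing the maximal value only to a (tie-broken) maximal
bidder and a null signal to everyone else makes bidding one's signal a Bayes Nash
equilibrium of the second-price auction; the allocation is efficient (welfare equals
`E[max v]`), revenue is `0`, and aggregate bidder surplus equals `E[max v]`. -/
theorem bidder_optimal_structure (N : ℕ) (hN : 2 ≤ N)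
    (PV : Finset (Fin N → ℝ)) (lam : (Fin N → ℝ) → ℝ)
    (hl0 : ∀ v, 0 ≤ lam v) (hl1 : ∑ v ∈ PV, lam v = 1)
    (hval : ∀ v ∈ PV, ∀ i, v i ∈ Set.Icc (0:ℝ) 1) :
    -- (a) bidding one's signal is a Bayes Nash equilibrium
    (∀ i (d : ℝ → ℝ),
      (∑ v ∈ PV, ∑ k : Fin N, wMax lam v k *
          (winShare (Function.update (fun j => sigMax v k j) i (d (sigMax v k i))) i *
            (v i - secmax (Function.update (fun j => sigMax v k j) i (d (sigMax v k i))))))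
      ≤ ∑ v ∈ PV, ∑ k : Fin N, wMax lam v k *
          (winShare (fun j => sigMax v k j) i * (v i - secmax (fun j => sigMax v k j)))) ∧
    -- (b) welfare equals the maximal welfare E[max v]
    (∑ v ∈ PV, ∑ k : Fin N, wMax lam v k *
        ∑ i, winShare (fun j => sigMax v k j) i * v i)
      = ∑ v ∈ PV, lam v * maxVal v ∧
    -- (c) revenue is zero
    (∑ v ∈ PV, ∑ k : Fin N, wMax lam v k * secmax (fun j => sigMax v k j)) = 0 ∧
    -- (d) aggregate bidder surplus equals E[max v]
    (∑ v ∈ PV, ∑ k : Fin N, wMax lam v k *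
        ∑ i, winShare (fun j => sigMax v k j) i * (v i - secmax (fun j => sigMax v k j)))
      = ∑ v ∈ PV, lam v * maxVal v := by
  refine ⟨?_, ?_, ?_, ?_⟩
  · -- (a) equilibrium
    intro i d
    apply Finset.sum_le_sum
    intro v hv
    apply Finset.sum_le_sum
    intro k _
    by_cases hk : v k = maxVal v
    · have hv0 : ∀ j, 0 ≤ v j := fun j => (hval v hv j).1
      have hvle : ∀ j, v j ≤ v k := fun j => hk ▸ le_maxVal v j
      have hsecβ : secmax (fun j => sigMax v k j) = 0 :=
        secmax_peak hN _ k (v k) (hv0 k) (sigMax_peak v k)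
      refine mul_le_mul_of_nonneg_left ?_ (wMax_nonneg lam v (hl0 v) k)
      by_cases hik : i = k
      · subst hik
        have hsig : sigMax v i i = v i := by simp [sigMax]
        rw [hsig, hsecβ, sub_zero]
        set b := d (v i) with hbdef
        set β' := Function.update (fun j => sigMax v i j) i b with hβ'def
        have hβ' : ∀ j, β' j = if j = i then b else 0 := by
          intro j
          by_cases h : j = i <;> simp [hβ'def, Function.update_apply, sigMax, h]
        have hRHS : winShare (fun j => sigMax v i j) i * v i = v i := by
          rcases eq_or_lt_of_le (hv0 i) with h0 | hpos
          · rw [← h0, mul_zero]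
          · rw [winShare_peak _ i (v i) hpos (sigMax_peak v i) i, if_pos rfl, one_mul]
        rw [hRHS]
        by_cases hb : 0 ≤ b
        · rw [secmax_peak hN β' i b hb hβ', sub_zero]
          exact mul_le_of_le_one_left (hv0 i) (winShare_le_one β' i)
        · push_neg at hb
          have hmax' : maxVal β' = 0 := by
            obtain ⟨m, hm⟩ := fin_exists_ne hN i
            have h := maxVal_eq β' m (fun j => by
              rw [hβ' j, hβ' m, if_neg hm]
              split
              · exact hb.le
              · exact le_refl 0)
            rw [h, hβ' m, if_neg hm]
          have hne : β' i ≠ maxVal β' := by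
            rw [hβ' i, if_pos rfl, hmax']
            exact hb.ne
          rw [winShare_eq_zero β' i hne, zero_mul]
          exact hv0 i
      · have hsig : sigMax v k i = 0 := by simp [sigMax, hik]
        rw [hsig, hsecβ, sub_zero]
        set b := d 0 with hbdef
        set β' := Function.update (fun j => sigMax v k j) i b with hβ'def
        have hβ' : ∀ j, β' j = if j = i then b else if j = k then v k else 0 := by
          intro j
          by_cases h : j = i <;> simp [hβ'def, Function.update_apply, sigMax, h]
        have hRHS : winShare (fun j => sigMax v k j) i * v i = 0 := by
          rcases eq_or_lt_of_le (hv0 k) with h0 | hpos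
          · have hvi : v i = 0 := le_antisymm (h0 ▸ hvle i) (hv0 i)
            rw [hvi, mul_zero]
          · rw [winShare_peak _ k (v k) hpos (sigMax_peak v k) i, if_neg hik, zero_mul]
        rw [hRHS]
        by_cases hwin : β' i = maxVal β'
        · have hβ'i : β' i = b := by rw [hβ' i, if_pos rfl]
          have hβ'k : β' k = v k := by
            rw [hβ' k, if_neg (Ne.symm hik), if_pos rfl]
          have hab : v k ≤ b := by
            calc v k = β' k := hβ'k.symm
              _ ≤ maxVal β' := le_maxVal β' k
              _ = β' i := hwin.symm
              _ = b := hβ'i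
          have hsec' : secmax β' = v k :=
            secmax_twopeak hN β' i k hik (v k) b (hv0 k) hab hβ'
          rw [hsec']
          have h1 : 0 ≤ winShare β' i := winShare_nonneg β' i
          have h2 : v i - v k ≤ 0 := by linarith [hvle i]
          nlinarith
        · rw [winShare_eq_zero β' i hwin, zero_mul]
    · simp [wMax, hk]
  · -- (b) welfare
    apply Finset.sum_congr rfl
    intro v hv
    have h1 : ∀ k : Fin N, wMax lam v k * (∑ i, winShare (fun j => sigMax v k j) i * v i)
        = wMax lam v k * maxVal v := by
      intro k
      by_cases hk : v k = maxVal v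
      · rw [welfare_eq hN v (fun j => (hval v hv j).1) k hk]
      · simp [wMax, hk]
    rw [Finset.sum_congr rfl (fun k _ => h1 k), ← Finset.sum_mul, wMax_sum hN lam v]
  · -- (c) revenue
    apply Finset.sum_eq_zero
    intro v hv
    apply Finset.sum_eq_zero
    intro k _
    by_cases hk : v k = maxVal v
    · rw [secmax_peak hN _ k (v k) (hval v hv k).1 (sigMax_peak v k), mul_zero]
    · simp [wMax, hk]
  · -- (d) surplus
    apply Finset.sum_congr rfl
    intro v hv
    have h1 : ∀ k : Fin N, wMax lam v k *
        (∑ i, winShare (fun j => sigMax v k j) i * (v i - secmax (fun j => sigMax v k j)))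
        = wMax lam v k * maxVal v := by
      intro k
      by_cases hk : v k = maxVal v
      · rw [secmax_peak hN _ k (v k) (hval v hv k).1 (sigMax_peak v k)]
        simp only [sub_zero]
        rw [welfare_eq hN v (fun j => (hval v hv j).1) k hk]
      · simp [wMax, hk]
    rw [Finset.sum_congr rfl (fun k _ => h1 k), ← Finset.sum_mul, wMax_sum hN lam v]
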